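/- arXiv:1811.01360 — 2 statements merged into one kernel-verified Lean document; each statement's English description precedes it below -/
import Mathlib

section
/- Let σ > 0 and z₀ ∈ (0,1). Then for every ω > 0 and every c with −2z₀√ω ≤ c < 2√ω, the solitary-wave profile satisfies the uniform lower bound ∫_ℝ |φ_{ω,c}(x)|^{2σ} dx ≥ (2(σ+1)/σ)·√((1−z₀)/(1+z₀)). -/
open MeasureTheory

/-- The amplitude `Φ_{ω,c}` of the solitary-wave profile for the generalized
derivative nonlinear Schrödinger equation. -/
noncomputable def PhiProf (σ ω c : ℝ) (x : ℝ) : ℝ :=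
  ((σ + 1) * (4 * ω - c ^ 2) /
      (2 * Real.sqrt ω * Real.cosh (σ * Real.sqrt (4 * ω - c ^ 2) * x) - c)) ^ (1 / (2 * σ))

/-- The solitary-wave profile `φ_{ω,c}`. -/
noncomputable def phiProf (σ ω c : ℝ) (x : ℝ) : ℂ :=
  (PhiProf σ ω c x : ℂ) *
    Complex.exp (Complex.I *
      (((c / 2) * x : ℝ) - ((1 / (2 * σ + 2)) * ∫ y in Set.Iic x, PhiProf σ ω c y ^ (2 * σ) : ℝ)))

/-!
The substitution `u = eˣ` turns `∫ (a cosh x - c)⁻¹ dx` into an arctangent integral with value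
`2 arccos (-c/a) / √(a² - c²)`, and rescaling gives the exact value
`∫ |φ_{ω,c}|^{2σ} = (2(σ+1)/σ) · arccos (-c / 2√ω)`. As `arccos` is decreasing and
`-c / 2√ω ≤ z₀`, this is at least `(2(σ+1)/σ) · arccos z₀`, and
`arccos z₀ ≥ sin (arccos z₀) = √(1 - z₀²) ≥ √((1 - z₀)/(1 + z₀))`.
-/

open Real Filter Topology Set

theorem integrable_deriv_of_nonneg {g g' : ℝ → ℝ} {m n : ℝ}
    (hderiv : ∀ x, HasDerivAt g (g' x) x) (hg' : ∀ x, 0 ≤ g' x)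
    (hbot : Tendsto g atBot (𝓝 m)) (htop : Tendsto g atTop (𝓝 n)) : Integrable g' := by
  have hcont : Continuous g := continuous_iff_continuousAt.2 fun x => (hderiv x).continuousAt
  have hmono : Monotone g := monotone_of_hasDerivAt_nonneg hderiv hg'
  refine integrable_of_intervalIntegral_norm_bounded (n - m)
    (fun i => intervalIntegral.integrableOn_deriv_of_nonneg hcont.continuousOn
      (fun y _ => hderiv y) fun y _ => hg' y)
    tendsto_neg_atTop_atBot tendsto_id (Eventually.of_forall fun i => ?_)
  have hint : IntervalIntegrable g' volume (-i) i :=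
    intervalIntegral.intervalIntegrable_deriv_of_nonneg hcont.continuousOn
      (fun y _ => hderiv y) fun y _ => hg' y
  calc ∫ x in -i..id i, ‖g' x‖ = ∫ x in -i..i, g' x := by
        simp only [id, Real.norm_of_nonneg (hg' _)]
    _ = g i - g (-i) := intervalIntegral.integral_eq_sub_of_hasDerivAt (fun y _ => hderiv y) hint
    _ ≤ n - m := sub_le_sub (hmono.ge_of_tendsto htop i) (hmono.le_of_tendsto hbot (-i))

theorem integral_of_hasDerivAt_of_nonneg {g g' : ℝ → ℝ} {m n : ℝ}
    (hderiv : ∀ x, HasDerivAt g (g' x) x) (hg' : ∀ x, 0 ≤ g' x)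
    (hbot : Tendsto g atBot (𝓝 m)) (htop : Tendsto g atTop (𝓝 n)) : ∫ x, g' x = n - m :=
  integral_of_hasDerivAt_of_tendsto hderiv (integrable_deriv_of_nonneg hderiv hg' hbot htop)
    hbot htop

theorem hasDerivAt_arctan_mul_exp_sub_div {a c : ℝ} (hc : |c| < a) (x : ℝ) :
    HasDerivAt (fun y => 2 / √(a ^ 2 - c ^ 2) * arctan ((a * exp y - c) / √(a ^ 2 - c ^ 2)))
      (a * cosh x - c)⁻¹ x := by
  obtain ⟨hc₁, hc₂⟩ := abs_lt.1 hc
  have hk2 : √(a ^ 2 - c ^ 2) ^ 2 = a ^ 2 - c ^ 2 := sq_sqrt (by nlinarith)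
  have hk : 0 < √(a ^ 2 - c ^ 2) := sqrt_pos.2 (by nlinarith)
  set k := √(a ^ 2 - c ^ 2)
  have hex := exp_pos x
  have hden : 0 < a * (exp x ^ 2 + 1) - 2 * exp x * c := by
    nlinarith [sq_nonneg (exp x - 1), mul_pos hex (sub_pos.2 hc₂)]
  refine ((((hasDerivAt_exp x).const_mul a).sub_const c).div_const k).arctan.const_mul
    (2 / k) |>.congr_deriv ?_
  rw [cosh_eq, exp_neg]
  field_simp
  linear_combination (-1 : ℝ) * hk2

theorem integral_inv_mul_cosh_sub {a c : ℝ} (hc : |c| < a) :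
    ∫ x, (a * cosh x - c)⁻¹ = 2 * arccos (-c / a) / √(a ^ 2 - c ^ 2) := by
  obtain ⟨hc₁, hc₂⟩ := abs_lt.1 hc
  have ha : 0 < a := by linarith
  have hk : 0 < √(a ^ 2 - c ^ 2) := sqrt_pos.2 (by nlinarith)
  set k := √(a ^ 2 - c ^ 2) with hk_def
  have hbot : Tendsto (fun y => 2 / k * arctan ((a * exp y - c) / k)) atBot
      (𝓝 (2 / k * arctan (-c / k))) := by
    have := ((tendsto_exp_atBot.const_mul a).sub_const c).div_const k
    simpa using (continuous_arctan.tendsto _).comp this |>.const_mul (2 / k)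
  have htop : Tendsto (fun y => 2 / k * arctan ((a * exp y - c) / k)) atTop
      (𝓝 (2 / k * (π / 2))) := by
    have := (tendsto_atTop_add_const_right _ (-c)
      (tendsto_exp_atTop.const_mul_atTop ha)).atTop_div_const hk
    simp only [← sub_eq_add_neg] at this
    exact ((tendsto_arctan_atTop.mono_right nhdsWithin_le_nhds).comp this).const_mul (2 / k)
  have harcsin : arcsin (-c / a) = arctan (-c / k) := by
    rw [arcsin_eq_arctan]
    · rw [show 1 - (-c / a) ^ 2 = (a ^ 2 - c ^ 2) / a ^ 2 by field_simp, sqrt_div' _ (sq_nonneg a),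
        sqrt_sq ha.le, ← hk_def]
      field_simp
    · exact ⟨by rw [lt_div_iff₀ ha]; linarith, by rw [div_lt_one ha]; linarith⟩
  rw [integral_of_hasDerivAt_of_nonneg (hasDerivAt_arctan_mul_exp_sub_div hc)
      (fun x => inv_nonneg.2 (by nlinarith [one_le_cosh x])) hbot htop,
    arccos_eq_pi_div_two_sub_arcsin, harcsin]
  ring

theorem sqrt_one_sub_div_one_add_le_arccos {z : ℝ} (h₀ : 0 ≤ z) (h₁ : z ≤ 1) :
    √((1 - z) / (1 + z)) ≤ arccos z :=
  calc √((1 - z) / (1 + z)) ≤ √(1 - z ^ 2) := by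
        gcongr
        rw [div_le_iff₀ (by linarith)]
        nlinarith
    _ = sin (arccos z) := (sin_arccos z).symm
    _ ≤ arccos z := sin_le (arccos_nonneg z)

theorem norm_phiProf (σ ω c x : ℝ) : ‖phiProf σ ω c x‖ = |PhiProf σ ω c x| := by
  rw [phiProf, norm_mul, Complex.norm_exp, Complex.norm_real, Real.norm_eq_abs]
  simp

theorem norm_phiProf_rpow {σ ω c : ℝ} (hσ : 0 < σ) (hc : |c| < 2 * √ω) (x : ℝ) :
    ‖phiProf σ ω c x‖ ^ (2 * σ) =
      (σ + 1) * (4 * ω - c ^ 2) / (2 * √ω * cosh (σ * √(4 * ω - c ^ 2) * x) - c) := by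
  obtain ⟨hc₁, hc₂⟩ := abs_lt.1 hc
  have hω : 0 < ω := sqrt_pos.1 (by linarith)
  have hbase : 0 ≤ (σ + 1) * (4 * ω - c ^ 2) /
      (2 * √ω * cosh (σ * √(4 * ω - c ^ 2) * x) - c) := by
    have hc2 : c ^ 2 < 4 * ω := by nlinarith [sq_sqrt hω.le]
    have hcosh := one_le_cosh (σ * √(4 * ω - c ^ 2) * x)
    apply div_nonneg <;> nlinarith
  rw [norm_phiProf, PhiProf, abs_of_nonneg (rpow_nonneg hbase _), one_div,
    rpow_inv_rpow hbase (by positivity)]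

theorem integral_norm_phiProf_rpow {σ ω c : ℝ} (hσ : 0 < σ) (hc : |c| < 2 * √ω) :
    ∫ x, ‖phiProf σ ω c x‖ ^ (2 * σ) = 2 * (σ + 1) / σ * arccos (-c / (2 * √ω)) := by
  obtain ⟨hc₁, hc₂⟩ := abs_lt.1 hc
  have hω : 0 < ω := sqrt_pos.1 (by linarith)
  have ha2 : (2 * √ω) ^ 2 = 4 * ω := by rw [mul_pow, sq_sqrt hω.le]; norm_num
  have hk : 0 < √(4 * ω - c ^ 2) := sqrt_pos.2 (by nlinarith)
  simp_rw [norm_phiProf_rpow hσ hc, div_eq_mul_inv _ (_ - c)]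
  rw [integral_const_mul, Measure.integral_comp_mul_left (fun y => (2 * √ω * cosh y - c)⁻¹),
    integral_inv_mul_cosh_sub hc, ha2, smul_eq_mul, abs_inv, abs_of_pos (by positivity)]
  field_simp
  rw [sq_sqrt (by nlinarith)]

/-- Uniform lower bound for the `L^{2σ}` norm of the solitary-wave profile on the
speed range `−2z₀√ω ≤ c < 2√ω`. -/
theorem solitary_wave_L2sigma_lower_bound (σ z₀ : ℝ) (hσ : 0 < σ) (hz₀ : z₀ ∈ Set.Ioo (0 : ℝ) 1) :
    ∀ ω c : ℝ, 0 < ω → -2 * z₀ * Real.sqrt ω ≤ c → c < 2 * Real.sqrt ω →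
      (2 * (σ + 1) / σ) * Real.sqrt ((1 - z₀) / (1 + z₀)) ≤
        ∫ x : ℝ, ‖phiProf σ ω c x‖ ^ (2 * σ) := by
  intro ω c hω hc₁ hc₂
  obtain ⟨hz₀₀, hz₀₁⟩ := hz₀
  have hsω : 0 < √ω := sqrt_pos.2 hω
  have hc : |c| < 2 * √ω := abs_lt.2 ⟨by nlinarith, hc₂⟩
  have hz : -c / (2 * √ω) ≤ z₀ := by rw [div_le_iff₀ (by positivity)]; linarith
  rw [integral_norm_phiProf_rpow hσ hc]
  gcongr
  calc √((1 - z₀) / (1 + z₀)) ≤ arccos z₀ := sqrt_one_sub_div_one_add_le_arccos hz₀₀.le hz₀₁.le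
    _ ≤ arccos (-c / (2 * √ω)) := arccos_le_arccos hz
end

section
/- Let σ ≥ 2, set s_c = 1/2 − 1/(2σ), and let ω > 0, z ∈ (0,1) and c = −2z√ω. Then the solitary-wave profile satisfies the exact scaling identity ‖φ_{ω,c}‖_{Ḣ^{s_c}(ℝ)} = (2(σ+1))^{1/(2σ)} · ‖x ↦ e^{−izx} g_z(x)‖_{Ḣ^{s_c}(ℝ)}. -/
open MeasureTheory

/-- The rescaled profile `h_z(x) = (cosh(2σx) + z)^{−1/(2σ)}`. -/
noncomputable def hProf (σ z : ℝ) (x : ℝ) : ℝ :=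
  (Real.cosh (2 * σ * x) + z) ^ (-(1 / (2 * σ)))

/-- The renormalized profile `g_z`. -/
noncomputable def gProf (σ z : ℝ) (x : ℝ) : ℂ :=
  (((1 - z ^ 2) ^ (1 / (2 * σ)) * hProf σ z (Real.sqrt (1 - z ^ 2) * x) : ℝ) : ℂ) *
    Complex.exp (-Complex.I * ((Real.sqrt (1 - z ^ 2) *
      ∫ y in Set.Iic (Real.sqrt (1 - z ^ 2) * x), hProf σ z y ^ (2 * σ) : ℝ) : ℂ))

/-- The homogeneous Sobolev norm `‖f‖_{Ḣ^s}`. -/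
noncomputable def hDotNorm (s : ℝ) (f : ℝ → ℂ) : ℝ :=
  Real.sqrt (∫ ξ : ℝ, |ξ| ^ (2 * s) * ‖FourierTransform.fourier f ξ‖ ^ 2)

/-!
With `c = -2z√ω` one has `4ω - c² = 4ω(1 - z²)` and the denominator of `Φ_{ω,c}` factors as
`2√ω (cosh + z)`, so `Φ_{ω,c}(x) = (2√ω(σ+1))^{1/(2σ)} (1 - z²)^{1/(2σ)} h_z(√(1-z²) √ω x)`.
Substituting `y ↦ √(1-z²) √ω y` in the phase integral turns this into
`φ_{ω,c}(x) = (2√ω(σ+1))^{1/(2σ)} G(√ω x)` with `G(x) = e^{-izx} g_z(x)`. The `Ḣ^s` norm is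
homogeneous of degree one in the amplitude and picks up `λ^{s-1/2}` under `x ↦ λx`; at `s = s_c`
this exactly cancels the factor `√ω^{1/(2σ)}` of the amplitude.
-/

open FourierTransform

theorem integral_comp_mul_left_Iic {E : Type*} [NormedAddCommGroup E] [NormedSpace ℝ E]
    (g : ℝ → E) (a : ℝ) {b : ℝ} (hb : 0 < b) :
    ∫ x in Set.Iic a, g (b * x) = b⁻¹ • ∫ x in Set.Iic (b * a), g x := by
  simpa [LinearOrderedField.smul_Iic hb] using
    Measure.setIntegral_comp_smul_of_pos volume g (Set.Iic a) hb

theorem Real.fourier_comp_mul_left {E : Type*} [NormedAddCommGroup E] [NormedSpace ℂ E]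
    (f : ℝ → E) {l : ℝ} (hl : l ≠ 0) (ξ : ℝ) :
    𝓕 (fun x => f (l * x)) ξ = |l|⁻¹ • 𝓕 f (ξ / l) := by
  have h : ∀ x, 𝐞 (-(x * ξ)) • f (l * x) = 𝐞 (-(l * x * (ξ / l))) • f (l * x) := by
    intro x; rw [mul_comm l x, mul_assoc, mul_div_cancel₀ _ hl]
  simp_rw [Real.fourier_real_eq, h]
  rw [Measure.integral_comp_mul_left (fun x => 𝐞 (-(x * (ξ / l))) • f x), abs_inv]

theorem Real.fourier_const_smul {E : Type*} [NormedAddCommGroup E] [NormedSpace ℂ E]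
    (f : ℝ → E) (A : ℂ) (ξ : ℝ) :
    𝓕 (fun x => A • f x) ξ = A • 𝓕 f ξ := by
  simp_rw [Real.fourier_real_eq, smul_comm _ A]
  exact integral_smul A _

theorem hDotNorm_const_mul (s : ℝ) (f : ℝ → ℂ) (A : ℂ) :
    hDotNorm s (fun x => A * f x) = ‖A‖ * hDotNorm s f := by
  have h : ∀ ξ : ℝ, |ξ| ^ (2 * s) * ‖𝓕 (fun x => A * f x) ξ‖ ^ 2
      = ‖A‖ ^ 2 * (|ξ| ^ (2 * s) * ‖𝓕 f ξ‖ ^ 2) := fun ξ => by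
    rw [show (fun x => A * f x) = fun x => A • f x from rfl, Real.fourier_const_smul,
      norm_smul]
    ring
  rw [hDotNorm, hDotNorm, funext h, integral_const_mul, Real.sqrt_mul (sq_nonneg _),
    Real.sqrt_sq (norm_nonneg A)]

theorem hDotNorm_comp_mul_left (s : ℝ) (f : ℝ → ℂ) {l : ℝ} (hl : l ≠ 0) :
    hDotNorm s (fun x => f (l * x)) = |l| ^ (s - 1 / 2) * hDotNorm s f := by
  have hl' : 0 < |l| := abs_pos.mpr hl
  have h : ∀ ξ : ℝ, |ξ| ^ (2 * s) * ‖𝓕 (fun x => f (l * x)) ξ‖ ^ 2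
      = |l| ^ (2 * s - 2) * (|ξ / l| ^ (2 * s) * ‖𝓕 f (ξ / l)‖ ^ 2) := fun ξ => by
    have hξ : |ξ| = |l| * |ξ / l| := by rw [← abs_mul, mul_div_cancel₀ _ hl]
    rw [Real.fourier_comp_mul_left f hl, norm_smul, norm_inv, Real.norm_eq_abs, abs_abs, hξ,
      Real.mul_rpow hl'.le (abs_nonneg _), Real.rpow_sub hl', Real.rpow_two]
    field_simp
  have hs : (|l| ^ (s - 1 / 2)) ^ 2 = |l| ^ (2 * s - 2) * |l| := by
    rw [← Real.rpow_natCast, ← Real.rpow_mul hl'.le, ← Real.rpow_add_one hl'.ne']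
    congr 1
    push_cast
    ring
  rw [hDotNorm, hDotNorm, funext h, integral_const_mul,
    Measure.integral_comp_div (fun η => |η| ^ (2 * s) * ‖𝓕 f η‖ ^ 2), smul_eq_mul, ← mul_assoc,
    ← hs, Real.sqrt_mul (sq_nonneg _), Real.sqrt_sq (by positivity)]

section Profiles

variable {σ ω z : ℝ}

theorem cosh_add_nonneg (hz : -1 ≤ z) (t : ℝ) : 0 ≤ Real.cosh t + z := by
  linarith [Real.one_le_cosh t]

theorem hProf_rpow_two_mul (hσ : σ ≠ 0) (hz : -1 ≤ z) (t : ℝ) :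
    hProf σ z t ^ (2 * σ) = (Real.cosh (2 * σ * t) + z)⁻¹ := by
  rw [hProf, ← Real.rpow_mul (cosh_add_nonneg hz _), show -(1 / (2 * σ)) * (2 * σ) = -1 by field_simp,
    Real.rpow_neg_one]

theorem PhiProf_eq_rpow (hω : 0 < ω) (hz : |z| ≤ 1) (x : ℝ) :
    PhiProf σ ω (-2 * z * √ω) x = (2 * √ω * (σ + 1) * (1 - z ^ 2) *
      (Real.cosh (2 * σ * (√(1 - z ^ 2) * (√ω * x))) + z)⁻¹) ^ (1 / (2 * σ)) := by
  have hsω : 0 < √ω := Real.sqrt_pos.mpr hω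
  have hκ : √(1 - z ^ 2) ^ 2 = 1 - z ^ 2 :=
    Real.sq_sqrt (sub_nonneg.mpr (sq_le_one_iff_abs_le_one z |>.mpr hz))
  have hdisc : 4 * ω - (-2 * z * √ω) ^ 2 = (2 * √ω * √(1 - z ^ 2)) ^ 2 := by
    linear_combination (-4 * √ω ^ 2) * hκ - 4 * Real.sq_sqrt hω.le
  rw [PhiProf, hdisc, Real.sqrt_sq (by positivity)]
  congr 1
  rw [show 2 * √ω * Real.cosh (σ * (2 * √ω * √(1 - z ^ 2)) * x) - -2 * z * √ω
      = 2 * √ω * (Real.cosh (2 * σ * (√(1 - z ^ 2) * (√ω * x))) + z) by ring_nf]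
  field_simp
  rw [hκ]

theorem PhiProf_eq_mul_hProf (hσ : 0 < σ) (hω : 0 < ω) (hz : |z| ≤ 1) (x : ℝ) :
    PhiProf σ ω (-2 * z * √ω) x = (2 * √ω * (σ + 1)) ^ (1 / (2 * σ)) *
      ((1 - z ^ 2) ^ (1 / (2 * σ)) * hProf σ z (√(1 - z ^ 2) * (√ω * x))) := by
  have hz' : 0 ≤ 1 - z ^ 2 := sub_nonneg.mpr (sq_le_one_iff_abs_le_one z |>.mpr hz)
  have hbase := cosh_add_nonneg (neg_le_of_abs_le hz) (2 * σ * (√(1 - z ^ 2) * (√ω * x)))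
  rw [PhiProf_eq_rpow hω hz, Real.mul_rpow (by positivity) (inv_nonneg.mpr hbase),
    Real.mul_rpow (by positivity) hz', Real.inv_rpow hbase, ← Real.rpow_neg hbase, hProf,
    mul_assoc]

theorem PhiProf_rpow_two_mul (hσ : 0 < σ) (hω : 0 < ω) (hz : |z| ≤ 1) (x : ℝ) :
    PhiProf σ ω (-2 * z * √ω) x ^ (2 * σ) =
      2 * √ω * (σ + 1) * (1 - z ^ 2) * hProf σ z (√(1 - z ^ 2) * √ω * x) ^ (2 * σ) := by
  have hz' : 0 ≤ 1 - z ^ 2 := sub_nonneg.mpr (sq_le_one_iff_abs_le_one z |>.mpr hz)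
  have hbase := cosh_add_nonneg (neg_le_of_abs_le hz) (2 * σ * (√(1 - z ^ 2) * (√ω * x)))
  rw [PhiProf_eq_rpow hω hz, one_div, Real.rpow_inv_rpow (by positivity) (by positivity),
    hProf_rpow_two_mul hσ.ne' (neg_le_of_abs_le hz), mul_assoc (√(1 - z ^ 2))]

theorem integral_Iic_PhiProf_rpow (hσ : 0 < σ) (hω : 0 < ω) (hz : |z| < 1) (x : ℝ) :
    1 / (2 * σ + 2) * ∫ y in Set.Iic x, PhiProf σ ω (-2 * z * √ω) y ^ (2 * σ) =
      √(1 - z ^ 2) * ∫ y in Set.Iic (√(1 - z ^ 2) * (√ω * x)), hProf σ z y ^ (2 * σ) := by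
  have hz' : 0 < 1 - z ^ 2 := sub_pos.mpr (sq_lt_one_iff_abs_lt_one z |>.mpr hz)
  have hκ : 0 < √(1 - z ^ 2) := Real.sqrt_pos.mpr hz'
  have hsω : 0 < √ω := Real.sqrt_pos.mpr hω
  simp_rw [PhiProf_rpow_two_mul hσ hω hz.le]
  rw [integral_const_mul, integral_comp_mul_left_Iic (fun t => hProf σ z t ^ (2 * σ)) x
    (mul_pos hκ hsω), smul_eq_mul, mul_assoc (√(1 - z ^ 2)) √ω x]
  set I := ∫ y in Set.Iic (√(1 - z ^ 2) * (√ω * x)), hProf σ z y ^ (2 * σ)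
  field_simp
  linear_combination -I * Real.sq_sqrt hz'.le

theorem phiProf_eq_const_mul_gProf (hσ : 0 < σ) (hω : 0 < ω) (hz : |z| < 1) (x : ℝ) :
    phiProf σ ω (-2 * z * √ω) x = ((2 * √ω * (σ + 1)) ^ (1 / (2 * σ)) : ℝ) *
      (Complex.exp (-Complex.I * (z * (√ω * x) : ℝ)) * gProf σ z (√ω * x)) := by
  rw [phiProf, gProf, PhiProf_eq_mul_hProf hσ hω hz.le, integral_Iic_PhiProf_rpow hσ hω hz,
    show -2 * z * √ω / 2 * x = -(z * (√ω * x)) by ring, Complex.ofReal_neg, mul_sub, mul_neg,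
    ← neg_mul, sub_eq_add_neg (-Complex.I * _), ← neg_mul, Complex.exp_add]
  push_cast
  ring

end Profiles

/-- Exact scaling identity for the `Ḣ^{s_c}` norm of the solitary-wave profile with
`c = −2z√ω`, where `s_c = 1/2 − 1/(2σ)`. -/
theorem solitary_wave_Hdot_scaling (σ ω z : ℝ) (hσ : 2 ≤ σ) (hω : 0 < ω)
    (hz : z ∈ Set.Ioo (0 : ℝ) 1) :
    hDotNorm (1 / 2 - 1 / (2 * σ)) (phiProf σ ω (-2 * z * Real.sqrt ω)) =
      (2 * (σ + 1)) ^ (1 / (2 * σ)) *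
        hDotNorm (1 / 2 - 1 / (2 * σ))
          (fun x : ℝ => Complex.exp (-Complex.I * (z * x : ℝ)) * gProf σ z x) := by
  have hσ₀ : 0 < σ := by linarith
  have hz' : |z| < 1 := abs_lt.mpr ⟨by linarith [hz.1], hz.2⟩
  have hsω : 0 < √ω := Real.sqrt_pos.mpr hω
  set G : ℝ → ℂ := fun x => Complex.exp (-Complex.I * (z * x : ℝ)) * gProf σ z x
  have hφ : phiProf σ ω (-2 * z * √ω) =
      fun x => (((2 * √ω * (σ + 1)) ^ (1 / (2 * σ)) : ℝ) : ℂ) * G (√ω * x) :=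
    funext (phiProf_eq_const_mul_gProf hσ₀ hω hz')
  rw [hφ, hDotNorm_const_mul, hDotNorm_comp_mul_left _ G hsω.ne',
    Complex.norm_real, Real.norm_of_nonneg (by positivity), abs_of_pos hsω,
    show 1 / 2 - 1 / (2 * σ) - 1 / 2 = -(1 / (2 * σ)) by ring, Real.rpow_neg hsω.le,
    mul_comm (2 : ℝ) √ω, mul_assoc √ω, Real.mul_rpow hsω.le (by positivity)]
  field_simp
end
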